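/- arXiv:0904.2236 — 7 statements merged into one kernel-verified Lean document; each statement's English description precedes it below -/
import Mathlib

section
/- (Euler trace formula) Let φ(x) = a_n x^n + ... + a_0 ∈ C[x] have n distinct roots x_1,...,x_n, and let h = p/q be a rational function with q(x_i) ≠ 0 for all i. Let r(x) = b_{n-1}x^{n-1} + ... + b_0 be the unique polynomial of degree < n agreeing with φ'(x)h(x) at all roots of φ. Then Σ_{i=1}^n h(x_i) = b_{n-1}/a_n. -/
/-!
Write `φ = a_n ∏ (X - x_j)`. Then `φ'(x_i) = a_n ∏_{j ≠ i} (x_i - x_j)`, while the coefficient of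
`X^{n-1}` in the interpolant `r` is `∑ r(x_i) / ∏_{j ≠ i} (x_i - x_j)` (Lagrange's formula, read off
at the top degree). Substituting `r(x_i) = φ'(x_i) h(x_i)` turns each summand into `a_n h(x_i)`.
-/

open Polynomial Finset

namespace Lagrange

section IsDomain

variable {R ι : Type*} [CommRing R] [IsDomain R] {s : Finset ι} {v : ι → R} {φ : R[X]}

theorem eq_C_leadingCoeff_mul_nodal (hvs : Set.InjOn v s) (hdeg : φ.degree = #s)
    (hroots : ∀ i ∈ s, φ.eval (v i) = 0) : φ = C φ.leadingCoeff * nodal s v := by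
  have hlc : φ.leadingCoeff ≠ 0 := leadingCoeff_ne_zero.mpr fun hφ => by simp [hφ] at hdeg
  refine eq_of_degree_le_of_eval_index_eq s hvs hdeg.le ?_ ?_ ?_
  · rw [degree_C_mul hlc, degree_nodal, hdeg]
  · rw [leadingCoeff_mul, leadingCoeff_C, nodal_monic.leadingCoeff, mul_one]
  · intro i hi
    rw [hroots i hi, eval_mul, eval_nodal_at_node hi, mul_zero]

theorem eval_derivative_at_node [DecidableEq ι] (hvs : Set.InjOn v s) (hdeg : φ.degree = #s)
    (hroots : ∀ i ∈ s, φ.eval (v i) = 0) {i : ι} (hi : i ∈ s) :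
    (derivative φ).eval (v i) = φ.leadingCoeff * ∏ j ∈ s.erase i, (v i - v j) := by
  conv_lhs => rw [eq_C_leadingCoeff_mul_nodal hvs hdeg hroots]
  rw [derivative_C_mul, eval_mul, eval_C, eval_nodal_derivative_eval_node_eq hi, eval_nodal]

end IsDomain

theorem sum_eq_coeff_div_leadingCoeff {F ι : Type*} [Field F] [DecidableEq ι] {s : Finset ι}
    {v : ι → F} {φ r : F[X]} (hvs : Set.InjOn v s) (hdeg : φ.degree = #s)
    (hroots : ∀ i ∈ s, φ.eval (v i) = 0) (h : ι → F) (hrdeg : r.degree < #s)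
    (hr : ∀ i ∈ s, r.eval (v i) = (derivative φ).eval (v i) * h i) :
    ∑ i ∈ s, h i = r.coeff (#s - 1) / φ.leadingCoeff := by
  have hlc : φ.leadingCoeff ≠ 0 := leadingCoeff_ne_zero.mpr fun hφ => by simp [hφ] at hdeg
  have hterm : ∀ i ∈ s, r.eval (v i) / ∏ j ∈ s.erase i, (v i - v j) = φ.leadingCoeff * h i := by
    intro i hi
    have hprod : ∏ j ∈ s.erase i, (v i - v j) ≠ 0 := by
      refine prod_ne_zero_iff.mpr fun j hj => sub_ne_zero.mpr fun hij => ?_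
      exact ne_of_mem_erase hj (hvs (mem_of_mem_erase hj) hi hij.symm)
    rw [hr i hi, eval_derivative_at_node hvs hdeg hroots hi]
    field_simp
  rw [coeff_eq_sum hvs hrdeg, sum_congr rfl hterm, ← mul_sum, mul_div_cancel_left₀ _ hlc]

end Lagrange

theorem euler_trace_formula_general (n : ℕ) (φ : Polynomial ℂ)
    (hdeg : φ.degree = (n : WithBot ℕ)) (x : Fin n → ℂ) (hx : Function.Injective x)
    (hroots : ∀ i, φ.eval (x i) = 0)
    (p q : Polynomial ℂ)
    (r : Polynomial ℂ) (hrdeg : r.degree < (n : WithBot ℕ))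
    (hr : ∀ i, r.eval (x i) =
      (Polynomial.derivative φ).eval (x i) * (p.eval (x i) / q.eval (x i))) :
    ∑ i, p.eval (x i) / q.eval (x i) = r.coeff (n - 1) / φ.leadingCoeff := by
  have hcard : #(univ : Finset (Fin n)) = n := card_fin n
  have htrace := Lagrange.sum_eq_coeff_div_leadingCoeff (s := univ) hx.injOn (by rwa [hcard])
    (fun i _ => hroots i) (fun i => p.eval (x i) / q.eval (x i)) (by rwa [hcard])
    (fun i _ => hr i)
  rwa [hcard] at htrace

theorem euler_trace_formula (n : ℕ) (φ : Polynomial ℂ)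
    (hdeg : φ.degree = (n : WithBot ℕ)) (x : Fin n → ℂ) (hx : Function.Injective x)
    (hroots : ∀ i, φ.eval (x i) = 0)
    (p q : Polynomial ℂ) (hq : ∀ i, q.eval (x i) ≠ 0)
    (r : Polynomial ℂ) (hrdeg : r.degree < (n : WithBot ℕ))
    (hr : ∀ i, r.eval (x i) =
      (Polynomial.derivative φ).eval (x i) * (p.eval (x i) / q.eval (x i))) :
    ∑ i, p.eval (x i) / q.eval (x i) = r.coeff (n - 1) / φ.leadingCoeff :=
  euler_trace_formula_general n φ hdeg x hx hroots p q r hrdeg hr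
end

section
/- Let φ(x) = a_n x^n + ... + a_0 ∈ C[x] have n distinct roots. If the remainder of φ'(x)h(x) modulo φ(x) (the unique polynomial of degree < n agreeing with φ'·h at all roots) has zero coefficient of x^{n-1}, then Σ_{i=1}^n h(x_i) = 0. -/
/-!
Write `φ = a · ∏ (X - xᵢ)`, so that `φ'(xᵢ) = a · ∏_{j ≠ i} (xᵢ - xⱼ)`. Lagrange interpolation
at the `n` roots expresses the coefficient of `X^(n-1)` of any `r` with `deg r < n` as
`∑ r(xᵢ) / ∏_{j ≠ i} (xᵢ - xⱼ)`; when `r(xᵢ) = φ'(xᵢ) h(xᵢ)` this is `a · ∑ h(xᵢ)`, and `a ≠ 0`.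
-/

open Polynomial Finset

namespace Polynomial

variable {F ι : Type*} [Field F] {s : Finset ι} {v : ι → F} {φ : F[X]}

theorem eq_C_leadingCoeff_mul_nodal (hvs : Set.InjOn v s) (hdeg : φ.degree = #s)
    (hroots : ∀ i ∈ s, φ.eval (v i) = 0) :
    φ = C φ.leadingCoeff * Lagrange.nodal s v := by
  have hφ : φ ≠ 0 := by rintro rfl; simp at hdeg
  refine eq_of_degree_le_of_eval_index_eq s hvs hdeg.le ?_ ?_ ?_
  · rw [degree_C_mul (leadingCoeff_ne_zero.mpr hφ), Lagrange.degree_nodal, hdeg]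
  · rw [leadingCoeff_mul, leadingCoeff_C, Lagrange.nodal_monic.leadingCoeff, mul_one]
  · intro i hi
    rw [hroots i hi, eval_mul, Lagrange.eval_nodal_at_node hi, mul_zero]

variable [DecidableEq ι]

theorem eval_derivative_eq_leadingCoeff_mul_prod (hvs : Set.InjOn v s)
    (hdeg : φ.degree = #s) (hroots : ∀ i ∈ s, φ.eval (v i) = 0) {i : ι} (hi : i ∈ s) :
    (derivative φ).eval (v i) = φ.leadingCoeff * ∏ j ∈ s.erase i, (v i - v j) := by
  conv_lhs => rw [eq_C_leadingCoeff_mul_nodal hvs hdeg hroots]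
  rw [derivative_C_mul, eval_mul, eval_C, Lagrange.eval_nodal_derivative_eval_node_eq hi,
    Lagrange.eval_nodal]

theorem coeff_card_sub_one_eq_leadingCoeff_mul_sum (hvs : Set.InjOn v s)
    (hdeg : φ.degree = #s) (hroots : ∀ i ∈ s, φ.eval (v i) = 0) {r : F[X]}
    (hr : r.degree < #s) {h : ι → F}
    (hrh : ∀ i ∈ s, r.eval (v i) = (derivative φ).eval (v i) * h i) :
    r.coeff (#s - 1) = φ.leadingCoeff * ∑ i ∈ s, h i := by
  rw [Lagrange.coeff_eq_sum hvs hr, mul_sum]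
  refine sum_congr rfl fun i hi => ?_
  have hprod : ∏ j ∈ s.erase i, (v i - v j) ≠ 0 :=
    prod_ne_zero_iff.mpr fun j hj =>
      sub_ne_zero_of_ne fun hij => (mem_erase.mp hj).1 (hvs (mem_of_mem_erase hj) hi hij.symm)
  rw [hrh i hi, eval_derivative_eq_leadingCoeff_mul_prod hvs hdeg hroots hi]
  field_simp

end Polynomial

theorem euler_trace_vanishing_general (n : ℕ) (φ : Polynomial ℂ)
    (hdeg : φ.degree = (n : WithBot ℕ)) (x : Fin n → ℂ) (hx : Function.Injective x)
    (hroots : ∀ i, φ.eval (x i) = 0)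
    (p q : Polynomial ℂ)
    (r : Polynomial ℂ) (hrdeg : r.degree < (n : WithBot ℕ))
    (hr : ∀ i, r.eval (x i) =
      (Polynomial.derivative φ).eval (x i) * (p.eval (x i) / q.eval (x i)))
    (htop : r.coeff (n - 1) = 0) :
    ∑ i, p.eval (x i) / q.eval (x i) = 0 := by
  have hcard : #(univ : Finset (Fin n)) = n := card_fin n
  have hφ : φ.leadingCoeff ≠ 0 := leadingCoeff_ne_zero.mpr (by rintro rfl; simp at hdeg)
  have hcoeff := coeff_card_sub_one_eq_leadingCoeff_mul_sum (s := univ) hx.injOn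
    (by rw [hcard, hdeg]) (fun i _ => hroots i) (by rwa [hcard]) (fun i _ => hr i)
  rw [hcard, htop, eq_comm, mul_eq_zero] at hcoeff
  exact hcoeff.resolve_left hφ

theorem euler_trace_vanishing (n : ℕ) (φ : Polynomial ℂ)
    (hdeg : φ.degree = (n : WithBot ℕ)) (x : Fin n → ℂ) (hx : Function.Injective x)
    (hroots : ∀ i, φ.eval (x i) = 0)
    (p q : Polynomial ℂ) (hq : ∀ i, q.eval (x i) ≠ 0)
    (r : Polynomial ℂ) (hrdeg : r.degree < (n : WithBot ℕ))
    (hr : ∀ i, r.eval (x i) =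
      (Polynomial.derivative φ).eval (x i) * (p.eval (x i) / q.eval (x i)))
    (htop : r.coeff (n - 1) = 0) :
    ∑ i, p.eval (x i) / q.eval (x i) = 0 :=
  euler_trace_vanishing_general n φ hdeg x hx hroots p q r hrdeg hr htop
end

section
/- (Elliptic umbilic magnification relation) Let c, s_1, s_2 ∈ C be such that φ(x) = 108x^4 - (36c^2 - 36s_1)x^2 + (8c^3 - 24c s_1)x + 4c^2 s_1 - 3s_2^2 has four distinct roots x_1,...,x_4, with 6x_i - 2c ≠ 0 and J(x_i) = 4c^2 - 12s_1 - 24c x_i - 72x_i^2 ≠ 0 for each i. Then Σ_{i=1}^4 1/J(x_i) = 0. -/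
theorem elliptic_umbilic_magnification_relation (c s₁ s₂ : ℂ) (x : Fin 4 → ℂ)
    (hinj : Function.Injective x)
    (hroot : ∀ i, 108 * (x i) ^ 4 - (36 * c ^ 2 - 36 * s₁) * (x i) ^ 2 +
      (8 * c ^ 3 - 24 * c * s₁) * x i + 4 * c ^ 2 * s₁ - 3 * s₂ ^ 2 = 0)
    (hden : ∀ i, 6 * x i - 2 * c ≠ 0)
    (hJ : ∀ i, 4 * c ^ 2 - 12 * s₁ - 24 * c * x i - 72 * (x i) ^ 2 ≠ 0) :
    ∑ i, 1 / (4 * c ^ 2 - 12 * s₁ - 24 * c * x i - 72 * (x i) ^ 2) = 0 := by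
  set a := x 0 with ha
  set b := x 1 with hb
  set d := x 2 with hd
  set e := x 3 with he
  have h0 := hroot 0
  have h1 := hroot 1
  have h2 := hroot 2
  have h3 := hroot 3
  have nab : a - b ≠ 0 := sub_ne_zero.mpr (hinj.ne (by decide))
  have nad : a - d ≠ 0 := sub_ne_zero.mpr (hinj.ne (by decide))
  have nae : a - e ≠ 0 := sub_ne_zero.mpr (hinj.ne (by decide))
  have nbd : b - d ≠ 0 := sub_ne_zero.mpr (hinj.ne (by decide))
  have nbe : b - e ≠ 0 := sub_ne_zero.mpr (hinj.ne (by decide))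
  have nde : d - e ≠ 0 := sub_ne_zero.mpr (hinj.ne (by decide))
  -- g(u,v) = 0 for pairs of roots
  have hg01 : 108*(a^3+a^2*b+a*b^2+b^3) - (36*c^2-36*s₁)*(a+b) + (8*c^3-24*c*s₁) = 0 := by
    have key : (a-b) * (108*(a^3+a^2*b+a*b^2+b^3) - (36*c^2-36*s₁)*(a+b) + (8*c^3-24*c*s₁)) = 0 := by
      linear_combination h0 - h1
    exact (mul_eq_zero.mp key).resolve_left nab
  have hg02 : 108*(a^3+a^2*d+a*d^2+d^3) - (36*c^2-36*s₁)*(a+d) + (8*c^3-24*c*s₁) = 0 := by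
    have key : (a-d) * (108*(a^3+a^2*d+a*d^2+d^3) - (36*c^2-36*s₁)*(a+d) + (8*c^3-24*c*s₁)) = 0 := by
      linear_combination h0 - h2
    exact (mul_eq_zero.mp key).resolve_left nad
  have hg03 : 108*(a^3+a^2*e+a*e^2+e^3) - (36*c^2-36*s₁)*(a+e) + (8*c^3-24*c*s₁) = 0 := by
    have key : (a-e) * (108*(a^3+a^2*e+a*e^2+e^3) - (36*c^2-36*s₁)*(a+e) + (8*c^3-24*c*s₁)) = 0 := by
      linear_combination h0 - h3
    exact (mul_eq_zero.mp key).resolve_left nae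
  -- H(a,u,v) = 0
  have hH012 : 108*(a^2+a*b+a*d+b^2+b*d+d^2) - (36*c^2-36*s₁) = 0 := by
    have key : (b-d) * (108*(a^2+a*b+a*d+b^2+b*d+d^2) - (36*c^2-36*s₁)) = 0 := by
      linear_combination hg01 - hg02
    exact (mul_eq_zero.mp key).resolve_left nbd
  have hH013 : 108*(a^2+a*b+a*e+b^2+b*e+e^2) - (36*c^2-36*s₁) = 0 := by
    have key : (b-e) * (108*(a^2+a*b+a*e+b^2+b*e+e^2) - (36*c^2-36*s₁)) = 0 := by
      linear_combination hg01 - hg03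
    exact (mul_eq_zero.mp key).resolve_left nbe
  -- Vieta relations
  have hE1 : a + b + d + e = 0 := by
    have key : (d-e) * (108 * (a+b+d+e)) = 0 := by linear_combination hH012 - hH013
    have h' := (mul_eq_zero.mp key).resolve_left nde
    exact (mul_eq_zero.mp h').resolve_left (by norm_num)
  have hE2 : 108*(a*b+a*d+a*e+b*d+b*e+d*e) + 36*c^2 - 36*s₁ = 0 := by
    linear_combination -hH012 + 108*(a+b+d)*hE1
  have hE3 : 108*(a*b*d+a*b*e+a*d*e+b*d*e) + 8*c^3 - 24*c*s₁ = 0 := by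
    linear_combination (a+b)*hE2 + hg01 - 108*(a^2+a*b+b^2)*hE1
  -- key identities: J(x_i)*(2c-6x_i) = 108 * prod_{j≠i}(x_i - x_j)
  have key0 : (4*c^2-12*s₁-24*c*a-72*a^2)*(2*c-6*a) = 108*((a-b)*(a-d)*(a-e)) := by
    linear_combination 324*a^2*hE1 - 2*a*hE2 + hE3
  have key1 : (4*c^2-12*s₁-24*c*b-72*b^2)*(2*c-6*b) = 108*((b-a)*(b-d)*(b-e)) := by
    linear_combination 324*b^2*hE1 - 2*b*hE2 + hE3
  have key2 : (4*c^2-12*s₁-24*c*d-72*d^2)*(2*c-6*d) = 108*((d-a)*(d-b)*(d-e)) := by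
    linear_combination 324*d^2*hE1 - 2*d*hE2 + hE3
  have key3 : (4*c^2-12*s₁-24*c*e-72*e^2)*(2*c-6*e) = 108*((e-a)*(e-b)*(e-d)) := by
    linear_combination 324*e^2*hE1 - 2*e*hE2 + hE3
  have hJ0 := hJ 0; have hJ1 := hJ 1; have hJ2 := hJ 2; have hJ3 := hJ 3
  rw [Fin.sum_univ_four]
  have nba : b - a ≠ 0 := sub_ne_zero.mpr (hinj.ne (by decide))
  have nda : d - a ≠ 0 := sub_ne_zero.mpr (hinj.ne (by decide))
  have ndb : d - b ≠ 0 := sub_ne_zero.mpr (hinj.ne (by decide))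
  have nea : e - a ≠ 0 := sub_ne_zero.mpr (hinj.ne (by decide))
  have neb : e - b ≠ 0 := sub_ne_zero.mpr (hinj.ne (by decide))
  have ned : e - d ≠ 0 := sub_ne_zero.mpr (hinj.ne (by decide))
  have p0 : (108:ℂ)*((a-b)*(a-d)*(a-e)) ≠ 0 := by
    apply mul_ne_zero (by norm_num); exact mul_ne_zero (mul_ne_zero nab nad) nae
  have p1 : (108:ℂ)*((b-a)*(b-d)*(b-e)) ≠ 0 := by
    apply mul_ne_zero (by norm_num); exact mul_ne_zero (mul_ne_zero nba nbd) nbe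
  have p2 : (108:ℂ)*((d-a)*(d-b)*(d-e)) ≠ 0 := by
    apply mul_ne_zero (by norm_num); exact mul_ne_zero (mul_ne_zero nda ndb) nde
  have p3 : (108:ℂ)*((e-a)*(e-b)*(e-d)) ≠ 0 := by
    apply mul_ne_zero (by norm_num); exact mul_ne_zero (mul_ne_zero nea neb) ned
  have f0 : 1 / (4*c^2-12*s₁-24*c*a-72*a^2) = (2*c-6*a) / (108*((a-b)*(a-d)*(a-e))) := by
    rw [div_eq_div_iff (hJ 0) p0]; linear_combination -key0
  have f1 : 1 / (4*c^2-12*s₁-24*c*b-72*b^2) = (2*c-6*b) / (108*((b-a)*(b-d)*(b-e))) := by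
    rw [div_eq_div_iff (hJ 1) p1]; linear_combination -key1
  have f2 : 1 / (4*c^2-12*s₁-24*c*d-72*d^2) = (2*c-6*d) / (108*((d-a)*(d-b)*(d-e))) := by
    rw [div_eq_div_iff (hJ 2) p2]; linear_combination -key2
  have f3 : 1 / (4*c^2-12*s₁-24*c*e-72*e^2) = (2*c-6*e) / (108*((e-a)*(e-b)*(e-d))) := by
    rw [div_eq_div_iff (hJ 3) p3]; linear_combination -key3
  rw [show 4*c^2-12*s₁-24*c*(x 0)-72*(x 0)^2 = 4*c^2-12*s₁-24*c*a-72*a^2 from rfl] at *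
  rw [f0, f1, f2, f3]
  field_simp
  ring
end

section
/- (Hyperbolic umbilic magnification relation) Let c, s_1, s_2 ∈ C with c ≠ 0 be such that φ(x) = -27x^4 - 18s_1 x^2 - c^3 x - 3s_1^2 - c^2 s_2 has four distinct roots x_1,...,x_4, with J(x_i) = (-c^3 - 36s_1 x_i - 108x_i^3)/c ≠ 0 for each i. Then Σ_{i=1}^4 1/J(x_i) = 0. -/
set_option maxHeartbeats 1000000

lemma four_point_reciprocal (a b d e : ℂ) (hab : a - b ≠ 0) (had : a - d ≠ 0)
    (hae : a - e ≠ 0) (hbd : b - d ≠ 0) (hbe : b - e ≠ 0) (hde : d - e ≠ 0) :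
    1 / ((a - b) * (a - d) * (a - e)) + 1 / ((b - a) * (b - d) * (b - e)) +
    1 / ((d - a) * (d - b) * (d - e)) + 1 / ((e - a) * (e - b) * (e - d)) = 0 := by
  have hba : b - a ≠ 0 := fun h => hab (by linear_combination -h)
  have hda : d - a ≠ 0 := fun h => had (by linear_combination -h)
  have hea : e - a ≠ 0 := fun h => hae (by linear_combination -h)
  have hdb : d - b ≠ 0 := fun h => hbd (by linear_combination -h)
  have heb : e - b ≠ 0 := fun h => hbe (by linear_combination -h)
  have hed : e - d ≠ 0 := fun h => hde (by linear_combination -h)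
  have n1 : (a - b) * (a - d) * (a - e) ≠ 0 := mul_ne_zero (mul_ne_zero hab had) hae
  have n2 : (b - a) * (b - d) * (b - e) ≠ 0 := mul_ne_zero (mul_ne_zero hba hbd) hbe
  have n3 : (d - a) * (d - b) * (d - e) ≠ 0 := mul_ne_zero (mul_ne_zero hda hdb) hde
  have n4 : (e - a) * (e - b) * (e - d) ≠ 0 := mul_ne_zero (mul_ne_zero hea heb) hed
  rw [div_add_div _ _ n1 n2, div_add_div _ _ (mul_ne_zero n1 n2) n3,
    div_add_div _ _ (mul_ne_zero (mul_ne_zero n1 n2) n3) n4,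
    div_eq_iff (mul_ne_zero (mul_ne_zero (mul_ne_zero n1 n2) n3) n4)]
  ring

theorem hyperbolic_umbilic_magnification_relation (c s₁ s₂ : ℂ) (hc : c ≠ 0)
    (x : Fin 4 → ℂ) (hinj : Function.Injective x)
    (hroot : ∀ i, -27 * (x i) ^ 4 - 18 * s₁ * (x i) ^ 2 - c ^ 3 * x i -
      3 * s₁ ^ 2 - c ^ 2 * s₂ = 0)
    (hJ : ∀ i, (-c ^ 3 - 36 * s₁ * x i - 108 * (x i) ^ 3) / c ≠ 0) :
    ∑ i, 1 / ((-c ^ 3 - 36 * s₁ * x i - 108 * (x i) ^ 3) / c) = 0 := by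
  set u := x 0 with hu
  set v := x 1 with hv
  set w := x 2 with hw
  set z := x 3 with hz
  have hne : ∀ i j : Fin 4, i ≠ j → x i - x j ≠ 0 := fun i j hij =>
    sub_ne_zero.mpr (fun h => hij (hinj h))
  have huv : u - v ≠ 0 := hne 0 1 (by decide)
  have huw : u - w ≠ 0 := hne 0 2 (by decide)
  have huz : u - z ≠ 0 := hne 0 3 (by decide)
  have hvw : v - w ≠ 0 := hne 1 2 (by decide)
  have hvz : v - z ≠ 0 := hne 1 3 (by decide)
  have hwz : w - z ≠ 0 := hne 2 3 (by decide)
  -- first divided differences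
  have F : ∀ a b : ℂ, a - b ≠ 0 →
      (-27 * a ^ 4 - 18 * s₁ * a ^ 2 - c ^ 3 * a - 3 * s₁ ^ 2 - c ^ 2 * s₂ = 0) →
      (-27 * b ^ 4 - 18 * s₁ * b ^ 2 - c ^ 3 * b - 3 * s₁ ^ 2 - c ^ 2 * s₂ = 0) →
      -27 * (a^3 + a^2*b + a*b^2 + b^3) - 18 * s₁ * (a + b) - c ^ 3 = 0 := by
    intro a b hab ha hb
    have h : (a - b) * (-27 * (a^3 + a^2*b + a*b^2 + b^3) - 18 * s₁ * (a + b) - c ^ 3) = 0 := by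
      linear_combination ha - hb
    exact (mul_eq_zero.mp h).resolve_left hab
  have Fuv := F u v huv (hroot 0) (hroot 1)
  have Fuw := F u w huw (hroot 0) (hroot 2)
  have Fuz := F u z huz (hroot 0) (hroot 3)
  -- second divided differences
  have G : ∀ b d : ℂ, b - d ≠ 0 →
      (-27 * (u^3 + u^2*b + u*b^2 + b^3) - 18 * s₁ * (u + b) - c ^ 3 = 0) →
      (-27 * (u^3 + u^2*d + u*d^2 + d^3) - 18 * s₁ * (u + d) - c ^ 3 = 0) →
      -27 * (u^2 + b^2 + d^2 + u*b + u*d + b*d) - 18 * s₁ = 0 := by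
    intro b d hbd h1 h2
    have h : (b - d) * (-27 * (u^2 + b^2 + d^2 + u*b + u*d + b*d) - 18 * s₁) = 0 := by
      linear_combination h1 - h2
    exact (mul_eq_zero.mp h).resolve_left hbd
  have Guvw := G v w hvw Fuv Fuw
  have Guvz := G v z hvz Fuv Fuz
  -- e1 = 0
  have he1 : u + v + w + z = 0 := by
    have h : (w - z) * (-27 * (u + v + w + z)) = 0 := by
      linear_combination Guvw - Guvz
    have h2 := (mul_eq_zero.mp h).resolve_left hwz
    linear_combination -h2 / 27
  have he2 : 27 * (u*v + u*w + u*z + v*w + v*z + w*z) = 18 * s₁ := by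
    linear_combination Guvw + 27 * (u + v + w) * he1
  have he3 : 27 * (u*v*w + u*v*z + u*w*z + v*w*z) = -c ^ 3 := by
    linear_combination -Fuv - 27 * (u^2 + u*v + v^2) * he1 + (u + v) * he2
  -- φ'(x_i) = -27 ∏_{j≠i} (x_i - x_j)
  have hd0 : -c ^ 3 - 36 * s₁ * u - 108 * u ^ 3 = -27 * ((u - v) * (u - w) * (u - z)) := by
    linear_combination (-81 * u ^ 2) * he1 + (2 * u) * he2 - he3
  have hd1 : -c ^ 3 - 36 * s₁ * v - 108 * v ^ 3 = -27 * ((v - u) * (v - w) * (v - z)) := by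
    linear_combination (-81 * v ^ 2) * he1 + (2 * v) * he2 - he3
  have hd2 : -c ^ 3 - 36 * s₁ * w - 108 * w ^ 3 = -27 * ((w - u) * (w - v) * (w - z)) := by
    linear_combination (-81 * w ^ 2) * he1 + (2 * w) * he2 - he3
  have hd3 : -c ^ 3 - 36 * s₁ * z - 108 * z ^ 3 = -27 * ((z - u) * (z - v) * (z - w)) := by
    linear_combination (-81 * z ^ 2) * he1 + (2 * z) * he2 - he3
  rw [Fin.sum_univ_four]
  show 1 / ((-c ^ 3 - 36 * s₁ * u - 108 * u ^ 3) / c) +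
      1 / ((-c ^ 3 - 36 * s₁ * v - 108 * v ^ 3) / c) +
      1 / ((-c ^ 3 - 36 * s₁ * w - 108 * w ^ 3) / c) +
      1 / ((-c ^ 3 - 36 * s₁ * z - 108 * z ^ 3) / c) = 0
  rw [hd0, hd1, hd2, hd3]
  have L := four_point_reciprocal u v w z huv huw huz hvw hvz hwz
  have hvu : v - u ≠ 0 := fun h => huv (by linear_combination -h)
  have hwu : w - u ≠ 0 := fun h => huw (by linear_combination -h)
  have hzu : z - u ≠ 0 := fun h => huz (by linear_combination -h)
  have hwv : w - v ≠ 0 := fun h => hvw (by linear_combination -h)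
  have hzv : z - v ≠ 0 := fun h => hvz (by linear_combination -h)
  have hrw : ∀ D : ℂ, c / (-27 * D) = -c / 27 * (1 / D) := by
    intro D
    rw [mul_one_div, div_div, neg_mul, div_neg, neg_div]
  rw [one_div_div, one_div_div, one_div_div, one_div_div, hrw, hrw, hrw, hrw]
  linear_combination (-c / 27) * L
end

section
/- (Parabolic umbilic magnification relation) Let c_1, c_2, s_1, s_2 ∈ C be such that φ(y) = -16y^5 - 32c_1 y^4 - (16c_1^2 + 8c_2)y^3 - (16c_1 c_2 - 4s_2)y^2 - (8c_1^2 c_2 - 8c_1 s_2)y - s_1^2 + 4c_1^2 s_2 has five distinct roots y_1,...,y_5, with J(y_i) = 4c_1 c_2 - 4s_2 + 12c_2 y_i + 24c_1 y_i^2 + 40y_i^3 ≠ 0 for each i. Then Σ_{i=1}^5 1/J(y_i) = 0. -/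
open Polynomial Finset

theorem parabolic_umbilic_magnification_relation (c₁ c₂ s₁ s₂ : ℂ) (y : Fin 5 → ℂ)
    (hinj : Function.Injective y)
    (hroot : ∀ i, -16 * (y i) ^ 5 - 32 * c₁ * (y i) ^ 4 -
      (16 * c₁ ^ 2 + 8 * c₂) * (y i) ^ 3 - (16 * c₁ * c₂ - 4 * s₂) * (y i) ^ 2 -
      (8 * c₁ ^ 2 * c₂ - 8 * c₁ * s₂) * y i - s₁ ^ 2 + 4 * c₁ ^ 2 * s₂ = 0)
    (hJ : ∀ i, 4 * c₁ * c₂ - 4 * s₂ + 12 * c₂ * y i + 24 * c₁ * (y i) ^ 2 +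
      40 * (y i) ^ 3 ≠ 0) :
    ∑ i, 1 / (4 * c₁ * c₂ - 4 * s₂ + 12 * c₂ * y i + 24 * c₁ * (y i) ^ 2 +
      40 * (y i) ^ 3) = 0 := by
  classical
  set J : Fin 5 → ℂ := fun i => 4 * c₁ * c₂ - 4 * s₂ + 12 * c₂ * y i + 24 * c₁ * (y i) ^ 2 +
      40 * (y i) ^ 3 with hJdef
  set Q : ℂ[X] := C (-16) * X ^ 5 + C (-32 * c₁) * X ^ 4 + C (-(16 * c₁ ^ 2 + 8 * c₂)) * X ^ 3
      + C (-(16 * c₁ * c₂ - 4 * s₂)) * X ^ 2 + C (-(8 * c₁ ^ 2 * c₂ - 8 * c₁ * s₂)) * X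
      + C (-s₁ ^ 2 + 4 * c₁ ^ 2 * s₂) with hQdef
  have hQeval : ∀ x : ℂ, Q.eval x = -16 * x ^ 5 - 32 * c₁ * x ^ 4 -
      (16 * c₁ ^ 2 + 8 * c₂) * x ^ 3 - (16 * c₁ * c₂ - 4 * s₂) * x ^ 2 -
      (8 * c₁ ^ 2 * c₂ - 8 * c₁ * s₂) * x - s₁ ^ 2 + 4 * c₁ ^ 2 * s₂ := by
    intro x; simp only [hQdef, eval_add, eval_mul, eval_pow, eval_C, eval_X]; ring
  have hinjOn : Set.InjOn y ↑(univ : Finset (Fin 5)) := fun a _ b _ h => hinj h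
  have hnodnd : (Lagrange.nodal (univ : Finset (Fin 5)) y).natDegree = 5 := by
    simp [Lagrange.natDegree_nodal]
  have hmono : (Lagrange.nodal (univ : Finset (Fin 5)) y).Monic := Lagrange.nodal_monic
  -- Q = -16 * nodal
  have hQP : Q = C (-16) * Lagrange.nodal univ y := by
    apply Polynomial.eq_of_degree_sub_lt_of_eval_index_eq (univ : Finset (Fin 5)) hinjOn
    · rw [Polynomial.degree_lt_iff_coeff_zero]
      intro m hm
      have hm5 : 5 ≤ m := by
        simp only [card_univ, Fintype.card_fin, Nat.cast_le] at hm
        exact_mod_cast hm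
      rw [coeff_sub, coeff_C_mul]
      rcases eq_or_lt_of_le hm5 with h5 | h5
      · have h1 : (Lagrange.nodal (univ : Finset (Fin 5)) y).coeff 5 = 1 := by
          have := hmono.coeff_natDegree; rwa [hnodnd] at this
        have hQ5 : Q.coeff 5 = -16 := by
          simp only [hQdef, coeff_add, coeff_C_mul, coeff_C, coeff_X_pow, coeff_X]
          norm_num
        rw [← h5, hQ5, h1]; ring
      · have h1 : (Lagrange.nodal (univ : Finset (Fin 5)) y).coeff m = 0 :=
          coeff_eq_zero_of_natDegree_lt (by omega)
        have hQm : Q.coeff m = 0 := by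
          have hQnd : Q.natDegree ≤ 5 := by rw [hQdef]; compute_degree
          exact coeff_eq_zero_of_natDegree_lt (by omega)
        rw [h1, hQm]; ring
    · intro i _
      rw [hQeval, hroot i, eval_mul, eval_C, Lagrange.eval_nodal_at_node (mem_univ i), mul_zero]
  -- derivative of nodal evaluated at nodes
  have hderiv : ∀ k : Fin 5, (Lagrange.nodal ((univ : Finset (Fin 5)).erase k) y).eval (y k)
      = J k * (-2 * c₁ - 2 * y k) / (-16) := by
    intro k
    have h1 : (derivative Q).eval (y k) = J k * (-2 * c₁ - 2 * y k) := by
      simp only [hQdef, hJdef, derivative_add, derivative_mul, derivative_C, derivative_X_pow,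
        derivative_X, zero_mul, mul_one, mul_zero, add_zero, zero_add, eval_add, eval_mul,
        eval_pow, eval_C, eval_X, eval_natCast]
      push_cast; ring
    have h2 : (derivative Q).eval (y k) =
        -16 * (Lagrange.nodal ((univ : Finset (Fin 5)).erase k) y).eval (y k) := by
      rw [hQP, derivative_C_mul, eval_C_mul,
        Lagrange.eval_nodal_derivative_eval_node_eq (mem_univ k)]
    rw [h2] at h1
    rw [← h1, mul_comm, mul_div_assoc, div_self (by norm_num : (-16:ℂ) ≠ 0), mul_one]
  -- the interpolating combination
  set N : ℂ[X] := ∑ i : Fin 5, C (1 / J i) * Lagrange.nodal (univ.erase i) y with hNdef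
  have hNM : N = C (c₁ / 8) + C (1 / 8) * X := by
    apply Polynomial.eq_of_degrees_lt_of_eval_index_eq (univ : Finset (Fin 5)) hinjOn
    · apply lt_of_le_of_lt (Polynomial.degree_sum_le _ _)
      rw [Finset.sup_lt_iff (by rw [Finset.card_univ, Fintype.card_fin]; exact (bot_lt_iff_ne_bot).mpr (by norm_num) : (⊥ : WithBot ℕ) < ((univ : Finset (Fin 5)).card : WithBot ℕ))]
      intro i _
      apply lt_of_le_of_lt (degree_mul_le _ _)
      have h1 : (Lagrange.nodal ((univ : Finset (Fin 5)).erase i) y).degree = 4 := by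
        rw [Lagrange.degree_nodal]; simp
      have h2 : (C (1 / J i)).degree ≤ 0 := degree_C_le
      calc (C (1 / J i)).degree + (Lagrange.nodal ((univ : Finset (Fin 5)).erase i) y).degree
          ≤ 0 + 4 := add_le_add h2 (le_of_eq h1)
        _ < (univ : Finset (Fin 5)).card := by
            rw [Finset.card_univ, Fintype.card_fin]
            norm_num
    · apply lt_of_le_of_lt (degree_add_le _ _)
      apply max_lt
      · refine lt_of_le_of_lt degree_C_le ?_
        rw [Finset.card_univ, Fintype.card_fin]
        exact_mod_cast (by norm_num : ((0:ℕ) : WithBot ℕ) < ((5:ℕ) : WithBot ℕ))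
      · apply lt_of_le_of_lt (degree_mul_le _ _)
        calc (C ((1:ℂ) / 8)).degree + (X : ℂ[X]).degree ≤ 0 + 1 :=
              add_le_add degree_C_le degree_X_le
          _ < (univ : Finset (Fin 5)).card := by
              rw [Finset.card_univ, Fintype.card_fin]
              norm_num
    · intro k _
      rw [hNdef, eval_finset_sum]
      rw [Finset.sum_eq_single k]
      · have hJk : J k ≠ 0 := hJ k
        rw [eval_mul, eval_C, hderiv k, eval_add, eval_mul, eval_C, eval_C, eval_X]
        field_simp
        ring
      · intro i _ hik
        rw [eval_mul, Lagrange.eval_nodal_at_node (Finset.mem_erase.mpr ⟨Ne.symm hik, mem_univ k⟩), mul_zero]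
      · intro h; exact absurd (mem_univ k) h
  -- compare coefficient 4
  have hc4 : N.coeff 4 = 0 := by
    rw [hNM]; simp [coeff_C, coeff_X]
  rw [hNdef, finset_sum_coeff] at hc4
  have hterm : ∀ i : Fin 5, (C (1 / J i) * Lagrange.nodal (univ.erase i) y).coeff 4 = 1 / J i := by
    intro i
    have hnd : (Lagrange.nodal ((univ : Finset (Fin 5)).erase i) y).natDegree = 4 := by
      rw [Lagrange.natDegree_nodal]; simp
    have hm : (Lagrange.nodal ((univ : Finset (Fin 5)).erase i) y).coeff 4 = 1 := by
      have := (Lagrange.nodal_monic (s := (univ : Finset (Fin 5)).erase i) (v := y)).coeff_natDegree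
      rwa [hnd] at this
    rw [coeff_C_mul, hm, mul_one]
  simp only [hterm] at hc4
  simpa [hJdef] using hc4
end

section
/- (Second elliptic umbilic magnification relation) Let c_1, c_2, c_3, s_1, s_2 ∈ C be such that φ(y) = 20y^6 - 16c_1 y^5 - 12c_2 y^4 - 8c_3 y^3 - 4s_2 y^2 - s_1^2 has six distinct nonzero roots y_1,...,y_6, with J(y_i) = 4s_2 + 12c_3 y_i + 24c_2 y_i^2 + 40c_1 y_i^3 - 60y_i^4 ≠ 0 for each i. Then Σ_{i=1}^6 1/J(y_i) = 0. -/
open Polynomial Finset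

lemma lagrange_sum_aux (y : Fin 6 → ℂ) (hinj : Function.Injective y) :
    ∑ i, y i / ∏ j ∈ univ.erase i, (y i - y j) = 0 := by
  classical
  set E : Fin 6 → ℂ := fun i => ∏ j ∈ univ.erase i, (y i - y j) with hE
  have hEne : ∀ i, E i ≠ 0 := by
    intro i
    rw [hE]
    refine prod_ne_zero_iff.mpr fun j hj => sub_ne_zero.mpr ?_
    exact fun h => (mem_erase.mp hj).1 (hinj h.symm)
  set q : ℂ[X] := ∑ i, C (y i / E i) * Lagrange.nodal (univ.erase i) y with hq
  have hqeval : ∀ k, q.eval (y k) = y k := by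
    intro k
    rw [hq, eval_finset_sum]
    rw [Finset.sum_eq_single k]
    · rw [eval_mul, eval_C, Lagrange.eval_nodal]
      show y k / E k * E k = y k
      exact div_mul_cancel₀ _ (hEne k)
    · intro i _ hik
      rw [eval_mul, Lagrange.eval_nodal_at_node (mem_erase.mpr ⟨hik.symm, mem_univ k⟩), mul_zero]
    · intro h; exact absurd (mem_univ k) h
  have h06 : (⊥ : WithBot ℕ) < 6 := bot_lt_iff_ne_bot.mpr (by simp)
  have hqdeg : q.degree < 6 := by
    rw [hq]
    refine lt_of_le_of_lt (degree_sum_le _ _) ?_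
    rw [Finset.sup_lt_iff h06]
    intro i _
    refine lt_of_le_of_lt (degree_mul_le _ _) ?_
    have h1 : (Lagrange.nodal (univ.erase i) y).degree = 5 := by
      rw [Lagrange.degree_nodal, card_erase_of_mem (mem_univ i), card_univ]
      norm_num
    calc (C (y i / E i)).degree + (Lagrange.nodal (univ.erase i) y).degree
        ≤ 0 + 5 := add_le_add degree_C_le (le_of_eq h1)
      _ < 6 := by norm_num
  have hXq : q = X := by
    have hinj' : Set.InjOn y (univ : Finset (Fin 6)) := fun a _ b _ h => hinj h
    have hz : (q - X) = 0 := by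
      refine Polynomial.eq_zero_of_degree_lt_of_eval_index_eq_zero (univ : Finset (Fin 6)) hinj'
        ?_ fun i _ => ?_
      · refine lt_of_le_of_lt (degree_sub_le _ _) ?_
        rw [card_univ]
        simp only [Fintype.card_fin, Nat.cast_ofNat]
        exact max_lt hqdeg (by rw [degree_X]; norm_num)
      · simp [hqeval i]
    exact sub_eq_zero.mp hz
  have hcoeff : q.coeff 5 = 0 := by rw [hXq, coeff_X]; norm_num
  rw [hq, finset_sum_coeff] at hcoeff
  have hterm : ∀ i ∈ (univ : Finset (Fin 6)),
      (C (y i / E i) * Lagrange.nodal (univ.erase i) y).coeff 5 = y i / E i := by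
    intro i _
    have hmon : (Lagrange.nodal (univ.erase i) y).Monic := Lagrange.nodal_monic
    have hnd : (Lagrange.nodal (univ.erase i) y).natDegree = 5 := by
      rw [Lagrange.natDegree_nodal, card_erase_of_mem (mem_univ i), card_univ]
      norm_num
    rw [coeff_C_mul, ← hnd, hmon.coeff_natDegree, mul_one]
  rw [Finset.sum_congr rfl hterm] at hcoeff
  exact hcoeff

theorem second_elliptic_umbilic_magnification_relation (c₁ c₂ c₃ s₁ s₂ : ℂ)
    (y : Fin 6 → ℂ) (hinj : Function.Injective y) (hne : ∀ i, y i ≠ 0)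
    (hroot : ∀ i, 20 * (y i) ^ 6 - 16 * c₁ * (y i) ^ 5 - 12 * c₂ * (y i) ^ 4 -
      8 * c₃ * (y i) ^ 3 - 4 * s₂ * (y i) ^ 2 - s₁ ^ 2 = 0)
    (hJ : ∀ i, 4 * s₂ + 12 * c₃ * y i + 24 * c₂ * (y i) ^ 2 +
      40 * c₁ * (y i) ^ 3 - 60 * (y i) ^ 4 ≠ 0) :
    ∑ i, 1 / (4 * s₂ + 12 * c₃ * y i + 24 * c₂ * (y i) ^ 2 +
      40 * c₁ * (y i) ^ 3 - 60 * (y i) ^ 4) = 0 := by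
  classical
  set J : Fin 6 → ℂ := fun i => 4 * s₂ + 12 * c₃ * y i + 24 * c₂ * (y i) ^ 2 +
      40 * c₁ * (y i) ^ 3 - 60 * (y i) ^ 4 with hJdef
  set p : ℂ[X] := C 20 * X ^ 6 - C (16 * c₁) * X ^ 5 - C (12 * c₂) * X ^ 4 -
    C (8 * c₃) * X ^ 3 - C (4 * s₂) * X ^ 2 - C (s₁ ^ 2) with hp
  have hinj' : Set.InjOn y (univ : Finset (Fin 6)) := fun a _ b _ h => hinj h
  -- p = C 20 * nodal
  have hpn : p = C 20 * Lagrange.nodal (univ : Finset (Fin 6)) y := by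
    have hdegp : p.degree = 6 := by
      rw [hp]; compute_degree!
    have hdegn : (C (20 : ℂ) * Lagrange.nodal (univ : Finset (Fin 6)) y).degree = 6 := by
      rw [degree_C_mul (by norm_num : (20:ℂ) ≠ 0), Lagrange.degree_nodal, card_univ]
      simp
    have hlcp : p.leadingCoeff = 20 := by
      rw [leadingCoeff, natDegree_eq_of_degree_eq_some hdegp, hp]
      simp only [coeff_sub, coeff_C_mul, coeff_X_pow, coeff_C]
      norm_num
    have hlc : p.leadingCoeff =
        (C (20:ℂ) * Lagrange.nodal (univ : Finset (Fin 6)) y).leadingCoeff := by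
      rw [hlcp, leadingCoeff_mul, leadingCoeff_C, Lagrange.nodal_monic.leadingCoeff, mul_one]
    refine Polynomial.eq_of_degree_le_of_eval_finset_eq ((univ : Finset (Fin 6)).image y)
      ?_ (by rw [hdegp, hdegn]) hlc ?_
    · rw [hdegp, Finset.card_image_of_injOn hinj', card_univ]
      simp
    · intro x hx
      rcases Finset.mem_image.mp hx with ⟨i, _, rfl⟩
      have h1 : p.eval (y i) = 0 := by
        have := hroot i
        rw [hp]; simp only [eval_sub, eval_mul, eval_pow, eval_C, eval_X]
        linear_combination this
      rw [h1, eval_mul, Lagrange.eval_nodal_at_node (mem_univ i), mul_zero]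
  -- derivative evaluation
  have hder : ∀ i, (derivative p).eval (y i) = -2 * y i * J i := by
    intro i
    rw [hp]
    simp only [derivative_sub, derivative_C_mul, derivative_X_pow, derivative_C, eval_sub,
      eval_mul, eval_pow, eval_C, eval_X, eval_zero]
    rw [hJdef]
    push_cast
    ring
  have hder2 : ∀ i, (derivative p).eval (y i) =
      20 * ∏ j ∈ univ.erase i, (y i - y j) := by
    intro i
    rw [hpn, derivative_mul, derivative_C, zero_mul, zero_add, eval_mul, eval_C,
      Lagrange.eval_nodal_derivative_eval_node_eq (mem_univ i), Lagrange.eval_nodal]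
  -- combine
  have key : ∀ i, 1 / J i = (-1/10) * (y i / ∏ j ∈ univ.erase i, (y i - y j)) := by
    intro i
    have hEne : (∏ j ∈ univ.erase i, (y i - y j)) ≠ 0 := by
      refine prod_ne_zero_iff.mpr fun j hj => sub_ne_zero.mpr ?_
      exact fun h => (mem_erase.mp hj).1 (hinj h.symm)
    have heq : -2 * y i * J i = 20 * ∏ j ∈ univ.erase i, (y i - y j) := by
      rw [← hder i, hder2 i]
    have hJi : J i ≠ 0 := hJ i
    simp only [hJdef] at heq
    field_simp
    linear_combination (-1/2 : ℂ) * heq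
  calc ∑ i, 1 / J i = ∑ i, (-1/10) * (y i / ∏ j ∈ univ.erase i, (y i - y j)) :=
        Finset.sum_congr rfl fun i _ => key i
    _ = (-1/10) * ∑ i, y i / ∏ j ∈ univ.erase i, (y i - y j) := by rw [Finset.mul_sum]
    _ = 0 := by rw [lagrange_sum_aux y hinj, mul_zero]
end

section
/- (Second hyperbolic umbilic magnification relation) Let c_1, c_2, c_3, s_1, s_2 ∈ C be such that φ(y) = -20y^6 - 16c_1 y^5 - 12c_2 y^4 - 8c_3 y^3 - 4s_2 y^2 - s_1^2 has six distinct nonzero roots y_1,...,y_6, with J(y_i) = 4s_2 + 12c_3 y_i + 24c_2 y_i^2 + 40c_1 y_i^3 + 60y_i^4 ≠ 0 for each i. Then Σ_{i=1}^6 1/J(y_i) = 0. -/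
/-!
If `p` has degree `n` and `n` distinct roots `yᵢ`, then `∑ f(yᵢ) / p'(yᵢ) = 0` for every `f` of
degree at most `n - 2` (Euler–Jacobi): up to the factor `1 / lc p`, the sum is the coefficient of
`X ^ (n - 1)` in the Lagrange interpolant of `f` at the `yᵢ`, which is `f` itself.
For the sextic `φ` one has `φ'(y) = -2y J(y)`, so `1 / J(yᵢ) = -2yᵢ / φ'(yᵢ)` and the
magnification relation is the case `f = -2X`.
-/

open Polynomial Finset

namespace Lagrange

variable {F ι : Type*} [Field F] {s : Finset ι} {v : ι → F}

theorem eq_C_leadingCoeff_mul_nodal_s17 (hvs : Set.InjOn v s) {p : F[X]} (hp : p.natDegree = #s)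
    (hroot : ∀ i ∈ s, p.eval (v i) = 0) : p = C p.leadingCoeff * nodal s v := by
  rcases eq_or_ne p 0 with rfl | hp0
  · simp
  refine eq_of_degree_le_of_eval_index_eq s hvs ?_ ?_ ?_ fun i hi => ?_
  · rw [degree_eq_natDegree hp0, hp]
  · rw [degree_C_mul (leadingCoeff_ne_zero.mpr hp0), degree_nodal, degree_eq_natDegree hp0, hp]
  · rw [leadingCoeff_mul, leadingCoeff_C, nodal_monic.leadingCoeff, mul_one]
  · rw [hroot i hi, eval_mul, eval_nodal_at_node hi, mul_zero]

variable [DecidableEq ι]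

theorem coeff_interpolate_card_sub_one (r : ι → F) :
    (interpolate s v r).coeff (#s - 1) = ∑ i ∈ s, r i * nodalWeight s v i := by
  rw [interpolate_apply, finsetSum_coeff]
  refine sum_congr rfl fun i hi => ?_
  have hdeg : (nodal (s.erase i) v).natDegree = #s - 1 := by
    rw [natDegree_nodal, card_erase_of_mem hi]
  rw [coeff_C_mul, basis_eq_prod_sub_inv_mul_nodal_div hi, ← nodal_erase_eq_nodal_div hi,
    coeff_C_mul, ← hdeg, nodal_monic.coeff_natDegree, mul_one]

theorem sum_eval_mul_nodalWeight_eq_zero (hvs : Set.InjOn v s) {f : F[X]}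
    (hf : f.natDegree + 1 < #s) : ∑ i ∈ s, f.eval (v i) * nodalWeight s v i = 0 := by
  have hf_lt : f.degree < #s := by
    refine degree_le_natDegree.trans_lt ?_
    exact_mod_cast (Nat.lt_succ_self _).trans hf
  rw [← coeff_interpolate_card_sub_one, ← eq_interpolate hvs hf_lt]
  exact coeff_eq_zero_of_natDegree_lt (by omega)

variable {p : F[X]} {i : ι}

theorem eval_derivative_eq_leadingCoeff_mul_nodalWeight_inv (hvs : Set.InjOn v s)
    (hp : p.natDegree = #s) (hroot : ∀ i ∈ s, p.eval (v i) = 0) (hi : i ∈ s) :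
    p.derivative.eval (v i) = p.leadingCoeff * (nodalWeight s v i)⁻¹ := by
  conv_lhs => rw [eq_C_leadingCoeff_mul_nodal_s17 hvs hp hroot]
  rw [derivative_C_mul, eval_mul, eval_C, nodalWeight_eq_eval_derivative_nodal hi, inv_inv]

theorem eval_derivative_ne_zero (hvs : Set.InjOn v s) (hp : p.natDegree = #s) (hp0 : p ≠ 0)
    (hroot : ∀ i ∈ s, p.eval (v i) = 0) (hi : i ∈ s) : p.derivative.eval (v i) ≠ 0 := by
  rw [eval_derivative_eq_leadingCoeff_mul_nodalWeight_inv hvs hp hroot hi]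
  exact mul_ne_zero (leadingCoeff_ne_zero.mpr hp0) (inv_ne_zero (nodalWeight_ne_zero hvs hi))

theorem sum_eval_div_eval_derivative_eq_zero (hvs : Set.InjOn v s) (hp : p.natDegree = #s)
    (hroot : ∀ i ∈ s, p.eval (v i) = 0) {f : F[X]} (hf : f.natDegree + 1 < #s) :
    ∑ i ∈ s, f.eval (v i) / p.derivative.eval (v i) = 0 := by
  calc ∑ i ∈ s, f.eval (v i) / p.derivative.eval (v i)
      = ∑ i ∈ s, p.leadingCoeff⁻¹ * (f.eval (v i) * nodalWeight s v i) := by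
        refine sum_congr rfl fun i hi => ?_
        rw [eval_derivative_eq_leadingCoeff_mul_nodalWeight_inv hvs hp hroot hi, div_eq_mul_inv,
          mul_inv, inv_inv]
        ring
    _ = 0 := by rw [← mul_sum, sum_eval_mul_nodalWeight_eq_zero hvs hf, mul_zero]

end Lagrange

open Lagrange

/-- The sextic `φ` whose roots are the `y`-coordinates of the pre-images of `(s₁, s₂)` under the
second hyperbolic umbilic map. -/
noncomputable def secondHyperbolicUmbilicPhi (c₁ c₂ c₃ s₁ s₂ : ℂ) : ℂ[X] :=
  C (-20) * X ^ 6 - C (16 * c₁) * X ^ 5 - C (12 * c₂) * X ^ 4 - C (8 * c₃) * X ^ 3 -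
    C (4 * s₂) * X ^ 2 - C (s₁ ^ 2)

section SecondHyperbolicUmbilic

variable (c₁ c₂ c₃ s₁ s₂ t : ℂ)

theorem eval_secondHyperbolicUmbilicPhi :
    (secondHyperbolicUmbilicPhi c₁ c₂ c₃ s₁ s₂).eval t = -20 * t ^ 6 - 16 * c₁ * t ^ 5 -
      12 * c₂ * t ^ 4 - 8 * c₃ * t ^ 3 - 4 * s₂ * t ^ 2 - s₁ ^ 2 := by
  simp [secondHyperbolicUmbilicPhi]

theorem eval_derivative_secondHyperbolicUmbilicPhi :
    (secondHyperbolicUmbilicPhi c₁ c₂ c₃ s₁ s₂).derivative.eval t = -2 * t * (4 * s₂ +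
      12 * c₃ * t + 24 * c₂ * t ^ 2 + 40 * c₁ * t ^ 3 + 60 * t ^ 4) := by
  simp only [secondHyperbolicUmbilicPhi, derivative_sub, derivative_C_mul_X_pow, derivative_C,
    eval_sub, eval_mul, eval_C, eval_pow, eval_X, eval_zero]
  push_cast
  ring

theorem natDegree_secondHyperbolicUmbilicPhi :
    (secondHyperbolicUmbilicPhi c₁ c₂ c₃ s₁ s₂).natDegree = 6 := by
  unfold secondHyperbolicUmbilicPhi; compute_degree!

theorem secondHyperbolicUmbilicPhi_ne_zero : secondHyperbolicUmbilicPhi c₁ c₂ c₃ s₁ s₂ ≠ 0 :=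
  ne_zero_of_natDegree_gt (n := 0) (by rw [natDegree_secondHyperbolicUmbilicPhi]; norm_num)

end SecondHyperbolicUmbilic

theorem second_hyperbolic_umbilic_magnification_relation_general (c₁ c₂ c₃ s₁ s₂ : ℂ)
    (y : Fin 6 → ℂ) (hinj : Function.Injective y)
    (hroot : ∀ i, -20 * (y i) ^ 6 - 16 * c₁ * (y i) ^ 5 - 12 * c₂ * (y i) ^ 4 -
      8 * c₃ * (y i) ^ 3 - 4 * s₂ * (y i) ^ 2 - s₁ ^ 2 = 0) :
    ∑ i, 1 / (4 * s₂ + 12 * c₃ * y i + 24 * c₂ * (y i) ^ 2 +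
      40 * c₁ * (y i) ^ 3 + 60 * (y i) ^ 4) = 0 := by
  set φ := secondHyperbolicUmbilicPhi c₁ c₂ c₃ s₁ s₂
  have hdeg : φ.natDegree = #(univ : Finset (Fin 6)) := natDegree_secondHyperbolicUmbilicPhi ..
  have hφ : ∀ i ∈ univ, φ.eval (y i) = 0 := fun i _ => by
    rw [eval_secondHyperbolicUmbilicPhi]; exact hroot i
  have hsum := sum_eval_div_eval_derivative_eq_zero hinj.injOn hdeg hφ (f := C (-2) * X)
    (by rw [natDegree_C_mul_X _ (by norm_num)]; decide)
  refine (sum_congr rfl fun i _ => ?_).trans hsum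
  have hφ' := eval_derivative_ne_zero hinj.injOn hdeg
    (secondHyperbolicUmbilicPhi_ne_zero _ _ _ _ _) hφ (mem_univ i)
  rw [eval_derivative_secondHyperbolicUmbilicPhi] at hφ' ⊢
  rw [eval_mul, eval_C, eval_X, div_mul_cancel_left₀ (left_ne_zero_of_mul hφ'), one_div]

theorem second_hyperbolic_umbilic_magnification_relation (c₁ c₂ c₃ s₁ s₂ : ℂ)
    (y : Fin 6 → ℂ) (hinj : Function.Injective y) (hne : ∀ i, y i ≠ 0)
    (hroot : ∀ i, -20 * (y i) ^ 6 - 16 * c₁ * (y i) ^ 5 - 12 * c₂ * (y i) ^ 4 -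
      8 * c₃ * (y i) ^ 3 - 4 * s₂ * (y i) ^ 2 - s₁ ^ 2 = 0)
    (hJ : ∀ i, 4 * s₂ + 12 * c₃ * y i + 24 * c₂ * (y i) ^ 2 +
      40 * c₁ * (y i) ^ 3 + 60 * (y i) ^ 4 ≠ 0) :
    ∑ i, 1 / (4 * s₂ + 12 * c₃ * y i + 24 * c₂ * (y i) ^ 2 +
      40 * c₁ * (y i) ^ 3 + 60 * (y i) ^ 4) = 0 :=
  second_hyperbolic_umbilic_magnification_relation_general c₁ c₂ c₃ s₁ s₂ y hinj hroot
end
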